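/- arXiv:2011.02315 — 5 statements merged into one kernel-verified Lean document; each statement's English description precedes it below -/
import Mathlib

section
/- Let H be a real separable Hilbert space and let ψ : [0,∞) → [0,1] be a bounded, continuous, strictly decreasing positive definite function with ψ(t) → 0 as t → ∞ (e.g. ψ(t) = e^{-t²}), and set k(x,y) = ψ(‖x−y‖). Let P₁ and P₂ be Borel probability measures on H with kernel mean functions m_{P₁} and m_{P₂}. If m_{P₂}(y) > m_{P₁}(y) for a given y ∈ H, then there exists r > 0 such that P₂(B_r(y)) > P₁(B_r(y)), where B_r(y) = {x ∈ H : ‖x − y‖ < r} is the open ball of radius r centered at y. -/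
/-!
Argue by contradiction: suppose `P₂(B_r(y)) ≤ P₁(B_r(y))` for every `r > 0`. Since `ψ` is
continuous, decreasing and tends to `0`, every superlevel set `{x | t < ψ ‖y - x‖}` with `t > 0`
is an open ball about `y` (possibly empty), so it has no larger `P₂`-mass than `P₁`-mass. The
layer-cake formula then gives `m_{P₂}(y) ≤ m_{P₁}(y)`.
-/

open MeasureTheory Filter
open scoped RealInnerProductSpace

noncomputable section

/-- A positive definite kernel: symmetric and with positive semi-definite Gram matrices. -/
def IsPosDefKernel {X : Type*} (k : X → X → ℝ) : Prop :=
  (∀ x y, k x y = k y x) ∧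
  ∀ (n : ℕ) (a : Fin n → ℝ) (x : Fin n → X),
    0 ≤ ∑ i, ∑ j, a i * a j * k (x i) (x j)

open Set

theorem integral_le_integral_of_measure_lt_le {α : Type*} [MeasurableSpace α]
    {μ ν : Measure α} {f : α → ℝ} (hf_nn : 0 ≤ f) (hf : Measurable f) (hfν : Integrable f ν)
    (hle : ∀ t, 0 < t → μ {a | t < f a} ≤ ν {a | t < f a}) :
    ∫ a, f a ∂μ ≤ ∫ a, f a ∂ν := by
  have hlin : ∫⁻ a, ENNReal.ofReal (f a) ∂μ ≤ ∫⁻ a, ENNReal.ofReal (f a) ∂ν := by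
    rw [lintegral_eq_lintegral_meas_lt μ (.of_forall hf_nn) hf.aemeasurable,
      lintegral_eq_lintegral_meas_lt ν (.of_forall hf_nn) hf.aemeasurable]
    refine lintegral_mono_ae ?_
    filter_upwards [self_mem_ae_restrict measurableSet_Ioi] with t ht using hle t ht
  rw [integral_eq_lintegral_of_nonneg_ae (.of_forall hf_nn) hf.aestronglyMeasurable,
    integral_eq_lintegral_of_nonneg_ae (.of_forall hf_nn) hf.aestronglyMeasurable]
  exact ENNReal.toReal_mono hfν.lintegral_lt_top.ne hlin

theorem exists_forall_lt_iff_lt_of_antitoneOn {ψ : ℝ → ℝ} (hcont : ContinuousOn ψ (Ici 0))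
    (hanti : AntitoneOn ψ (Ici 0)) {t : ℝ} (hlim : ∀ᶠ u in atTop, ψ u ≤ t) :
    ∃ r, ∀ u, 0 ≤ u → (t < ψ u ↔ u < r) := by
  by_cases h0 : t < ψ 0
  · set S := {u | 0 ≤ u ∧ t < ψ u}
    have hbdd : BddAbove S := by
      obtain ⟨M, hM⟩ := hlim.exists_forall_of_atTop
      exact ⟨M, fun u hu => not_lt.1 fun hMu => (hM u hMu.le).not_gt hu.2⟩
    refine ⟨sSup S, fun u hu => ⟨fun htu => ?_, fun hur => ?_⟩⟩
    · have hev : ∀ᶠ v in nhdsWithin u (Ioi u), t < ψ v :=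
        nhdsWithin_mono u (fun v hv => hu.trans (le_of_lt hv))
          ((hcont u hu).eventually (eventually_gt_nhds htu))
      obtain ⟨v, htv, huv⟩ := (hev.and self_mem_nhdsWithin).exists
      exact huv.trans_le (le_csSup hbdd ⟨hu.trans huv.le, htv⟩)
    · obtain ⟨v, ⟨-, htv⟩, huv⟩ := exists_lt_of_lt_csSup (⟨0, le_rfl, h0⟩ : S.Nonempty) hur
      exact htv.trans_le (hanti hu (hu.trans huv.le) huv.le)
  · exact ⟨0, fun u hu =>
      iff_of_false (not_lt.2 ((hanti (mem_Ici.2 le_rfl) hu hu).trans (not_lt.1 h0))) (not_lt.2 hu)⟩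

theorem exists_setOf_lt_comp_norm_sub_eq_ball {E : Type*} [SeminormedAddCommGroup E]
    {ψ : ℝ → ℝ} (hcont : ContinuousOn ψ (Ici 0)) (hanti : AntitoneOn ψ (Ici 0)) {t : ℝ}
    (hlim : ∀ᶠ u in atTop, ψ u ≤ t) (y : E) :
    ∃ r, {a : E | t < ψ ‖y - a‖} = Metric.ball y r := by
  obtain ⟨r, hr⟩ := exists_forall_lt_iff_lt_of_antitoneOn hcont hanti hlim
  refine ⟨r, Set.ext fun a => ?_⟩
  rw [Metric.mem_ball', dist_eq_norm]
  exact hr _ (norm_nonneg _)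

theorem statement_0_general
    {H : Type*} [NormedAddCommGroup H]
    [MeasurableSpace H] [BorelSpace H]
    (ψ : ℝ → ℝ)
    (hrange : ∀ t : ℝ, 0 ≤ t → ψ t ∈ Set.Icc (0 : ℝ) 1)
    (hcont : ContinuousOn ψ (Set.Ici 0))
    (hanti : StrictAntiOn ψ (Set.Ici 0))
    (hlim : Tendsto ψ atTop (nhds 0))
    (P₁ P₂ : Measure H) [IsProbabilityMeasure P₁]
    (y : H)
    (h : (∫ x, ψ ‖y - x‖ ∂P₁) < ∫ x, ψ ‖y - x‖ ∂P₂) :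
    ∃ r : ℝ, 0 < r ∧ P₁ (Metric.ball y r) < P₂ (Metric.ball y r) := by
  by_contra! hle
  have hf : Continuous fun x => ψ ‖y - x‖ :=
    hcont.comp_continuous (continuous_const.sub continuous_id).norm fun x => norm_nonneg _
  have hf_mem : ∀ x, ψ ‖y - x‖ ∈ Icc 0 1 := fun x => hrange _ (norm_nonneg _)
  have hf_int : Integrable (fun x => ψ ‖y - x‖) P₁ :=
    .of_bound hf.aestronglyMeasurable 1 (.of_forall fun x => by
      rw [Real.norm_of_nonneg (hf_mem x).1]; exact (hf_mem x).2)
  refine h.not_ge (integral_le_integral_of_measure_lt_le (fun x => (hf_mem x).1) hf.measurable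
    hf_int fun t ht => ?_)
  obtain ⟨r, hr⟩ := exists_setOf_lt_comp_norm_sub_eq_ball hcont hanti.antitoneOn
    ((hlim.eventually_lt_const ht).mono fun _ => le_of_lt) y
  rw [hr]
  rcases lt_or_ge 0 r with hr0 | hr0
  · exact hle r hr0
  · simp [Metric.ball_eq_empty.2 hr0]

/-- Let `H` be a real separable Hilbert space, `ψ : [0,∞) → [0,1]` a bounded,
continuous, strictly decreasing positive definite function with `ψ(t) → 0` as `t → ∞`, and
`k(x,y) = ψ(‖x-y‖)`. If the kernel means satisfy `m_{P₂}(y) > m_{P₁}(y)`, then there is `r > 0`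
with `P₂(B_r(y)) > P₁(B_r(y))`. -/
theorem statement_0
    {H : Type*} [NormedAddCommGroup H] [InnerProductSpace ℝ H]
    [CompleteSpace H] [SecondCountableTopology H]
    [MeasurableSpace H] [BorelSpace H]
    (ψ : ℝ → ℝ)
    (hrange : ∀ t : ℝ, 0 ≤ t → ψ t ∈ Set.Icc (0 : ℝ) 1)
    (hcont : ContinuousOn ψ (Set.Ici 0))
    (hanti : StrictAntiOn ψ (Set.Ici 0))
    (hlim : Tendsto ψ atTop (nhds 0))
    (hpd : IsPosDefKernel (fun x y : H => ψ ‖x - y‖))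
    (P₁ P₂ : Measure H) [IsProbabilityMeasure P₁] [IsProbabilityMeasure P₂]
    (y : H)
    (h : (∫ x, ψ ‖y - x‖ ∂P₁) < ∫ x, ψ ‖y - x‖ ∂P₂) :
    ∃ r : ℝ, 0 < r ∧ P₁ (Metric.ball y r) < P₂ (Metric.ball y r) :=
  statement_0_general ψ hrange hcont hanti hlim P₁ P₂ y h
end
end

section
/- Let H be a real separable Hilbert space and let ψ : [0,∞) → [0,1] be a bounded, continuous, strictly decreasing positive definite function with ψ(t) → 0 as t → ∞ (e.g. ψ(t) = e^{-t²}), and set k(x,y) = ψ(‖x−y‖). Let P be a Borel probability measure on H with kernel mean function m_P. If m_P(y₂) > m_P(y₁) for some y₁, y₂ ∈ H, then there exists r > 0 such that P(B_r(y₂)) > P(B_r(y₁)), where B_r(y) = {x ∈ H : ‖x − y‖ < r} is the open ball of radius r centered at y. -/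
open MeasureTheory Filter
open scoped RealInnerProductSpace

noncomputable section

/-- Let `H` be a real separable Hilbert space, `ψ : [0,∞) → [0,1]` a bounded,
continuous, strictly decreasing positive definite function with `ψ(t) → 0` as `t → ∞`, and
`k(x,y) = ψ(‖x-y‖)`. If the kernel mean of `P` satisfies `m_P(y₂) > m_P(y₁)`, then there is
`r > 0` with `P(B_r(y₂)) > P(B_r(y₁))`. -/
theorem statement_1
    {H : Type*} [NormedAddCommGroup H] [InnerProductSpace ℝ H]
    [CompleteSpace H] [SecondCountableTopology H]
    [MeasurableSpace H] [BorelSpace H]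
    (ψ : ℝ → ℝ)
    (hrange : ∀ t : ℝ, 0 ≤ t → ψ t ∈ Set.Icc (0 : ℝ) 1)
    (hcont : ContinuousOn ψ (Set.Ici 0))
    (hanti : StrictAntiOn ψ (Set.Ici 0))
    (hlim : Tendsto ψ atTop (nhds 0))
    (hpd : IsPosDefKernel (fun x y : H => ψ ‖x - y‖))
    (P : Measure H) [IsProbabilityMeasure P]
    (y₁ y₂ : H)
    (h : (∫ x, ψ ‖y₁ - x‖ ∂P) < ∫ x, ψ ‖y₂ - x‖ ∂P) :
    ∃ r : ℝ, 0 < r ∧ P (Metric.ball y₁ r) < P (Metric.ball y₂ r) := by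
  by_contra hcon
  push_neg at hcon
  have hcon' : ∀ r : ℝ, 0 < r → P (Metric.ball y₂ r) ≤ P (Metric.ball y₁ r) := hcon
  -- ψ is strictly positive on [0,∞)
  have hpos : ∀ s : ℝ, 0 ≤ s → 0 < ψ s := by
    intro s hs
    by_contra hle
    push_neg at hle
    have h1 : ψ (s + 1) < ψ s :=
      hanti (Set.mem_Ici.2 hs) (Set.mem_Ici.2 (by linarith)) (by linarith)
    have h2 := (hrange (s + 1) (by linarith)).1
    linarith
  have hc : ∀ y : H, Continuous (fun x : H => ψ ‖y - x‖) := by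
    intro y
    exact hcont.comp_continuous (by continuity) (fun x => Set.mem_Ici.2 (norm_nonneg _))
  -- key: for each t, the superlevel sets compare as required
  have key : ∀ t : ℝ, P {x : H | t < ψ ‖y₂ - x‖} ≤ P {x : H | t < ψ ‖y₁ - x‖} := by
    intro t
    rcases le_or_gt t 0 with ht | ht
    · have e : ∀ y : H, {x : H | t < ψ ‖y - x‖} = Set.univ := by
        intro y; ext x
        simp only [Set.mem_setOf_eq, Set.mem_univ, iff_true]
        exact lt_of_le_of_lt ht (hpos _ (norm_nonneg _))
      rw [e, e]
    rcases lt_or_ge t (ψ 0) with ht0 | ht0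
    · -- superlevel sets are balls of a common radius
      set S : Set ℝ := {s : ℝ | 0 ≤ s ∧ t < ψ s} with hS
      have h0S : (0 : ℝ) ∈ S := ⟨le_refl 0, ht0⟩
      obtain ⟨M, hM⟩ := eventually_atTop.1 (hlim.eventually (gt_mem_nhds ht))
      have hbdd : BddAbove S := by
        refine ⟨M, fun s hs => ?_⟩
        by_contra hMs
        push_neg at hMs
        exact absurd hs.2 (not_lt.2 (hM s hMs.le).le)
      set r : ℝ := sSup S with hrdef
      have hr0 : 0 < r := by
        have hev : ∀ᶠ s in nhdsWithin 0 (Set.Ici 0), t < ψ s :=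
          Tendsto.eventually (hcont 0 Set.self_mem_Ici) (lt_mem_nhds ht0)
        have hev' : ∀ᶠ s in nhdsWithin 0 (Set.Ioi 0), t < ψ s :=
          hev.filter_mono (nhdsWithin_mono 0 Set.Ioi_subset_Ici_self)
        obtain ⟨s, hts, hs0⟩ := (hev'.and eventually_mem_nhdsWithin).exists
        exact lt_of_lt_of_le hs0 (le_csSup hbdd ⟨(le_of_lt hs0), hts⟩)
      have he : ∀ y : H, {x : H | t < ψ ‖y - x‖} = Metric.ball y r := by
        intro y; ext x
        simp only [Set.mem_setOf_eq, Metric.mem_ball, dist_eq_norm, ← norm_sub_rev y x]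
        constructor
        · intro hx
          have hmem : ‖y - x‖ ∈ S := ⟨norm_nonneg _, hx⟩
          rcases lt_or_eq_of_le (le_csSup hbdd hmem) with hlt | heq
          · exact hlt
          · exfalso
            have htr : t < ψ r := by rw [hrdef, ← heq]; exact hx
            have hev : ∀ᶠ s in nhdsWithin r (Set.Ici 0), t < ψ s :=
              Tendsto.eventually (hcont r (Set.mem_Ici.2 hr0.le)) (lt_mem_nhds htr)
            have hsub : Set.Ioi r ⊆ Set.Ici (0 : ℝ) :=
              fun s hs => le_trans hr0.le (le_of_lt hs)
            have hev' : ∀ᶠ s in nhdsWithin r (Set.Ioi r), t < ψ s :=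
              hev.filter_mono (nhdsWithin_mono r hsub)
            obtain ⟨s, hts, hrs⟩ := (hev'.and eventually_mem_nhdsWithin).exists
            exact absurd (le_csSup hbdd ⟨le_trans hr0.le hrs.le, hts⟩) (not_le.2 hrs)
        · intro hx
          obtain ⟨s, hsS, hlt⟩ := exists_lt_of_lt_csSup ⟨0, h0S⟩ hx
          have := hanti (Set.mem_Ici.2 (norm_nonneg (y - x))) (Set.mem_Ici.2 hsS.1) hlt
          linarith [hsS.2]
      rw [he y₁, he y₂]
      exact hcon' r hr0
    · have e : ∀ y : H, {x : H | t < ψ ‖y - x‖} = ∅ := by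
        intro y; ext x
        simp only [Set.mem_setOf_eq, Set.mem_empty_iff_false, iff_false, not_lt]
        calc ψ ‖y - x‖ ≤ ψ 0 :=
              hanti.antitoneOn Set.self_mem_Ici (Set.mem_Ici.2 (norm_nonneg _)) (norm_nonneg _)
          _ ≤ t := ht0
      rw [e, e]
  -- layer cake
  have hnn : ∀ y : H, 0 ≤ᵐ[P] fun x => ψ ‖y - x‖ :=
    fun y => ae_of_all _ (fun x => (hpos _ (norm_nonneg _)).le)
  have hL : ∀ y : H, ∫⁻ x, ENNReal.ofReal (ψ ‖y - x‖) ∂P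
      = ∫⁻ t in Set.Ioi 0, P {x : H | t < ψ ‖y - x‖} :=
    fun y => lintegral_eq_lintegral_meas_lt P (hnn y) (hc y).measurable.aemeasurable
  have hle : ∫⁻ x, ENNReal.ofReal (ψ ‖y₂ - x‖) ∂P
      ≤ ∫⁻ x, ENNReal.ofReal (ψ ‖y₁ - x‖) ∂P := by
    rw [hL y₁, hL y₂]
    exact lintegral_mono fun t => key t
  have hfin : ∀ y : H, ∫⁻ x, ENNReal.ofReal (ψ ‖y - x‖) ∂P ≠ ⊤ := by
    intro y
    have hb : ∫⁻ x, ENNReal.ofReal (ψ ‖y - x‖) ∂P ≤ ∫⁻ _, 1 ∂P :=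
      lintegral_mono fun x => ENNReal.ofReal_le_one.2 (hrange _ (norm_nonneg _)).2
    refine ne_top_of_le_ne_top ?_ hb
    simp
  have hi : ∀ y : H, ∫ x, ψ ‖y - x‖ ∂P = (∫⁻ x, ENNReal.ofReal (ψ ‖y - x‖) ∂P).toReal :=
    fun y => integral_eq_lintegral_of_nonneg_ae (hnn y) (hc y).aestronglyMeasurable
  have hfinal : ∫ x, ψ ‖y₂ - x‖ ∂P ≤ ∫ x, ψ ‖y₁ - x‖ ∂P := by
    rw [hi y₁, hi y₂]
    exact ENNReal.toReal_mono (hfin y₁) hle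
  exact absurd h (not_lt.2 hfinal)
end
end

section
/- Let (bⱼ)_{j≥1} be a non-increasing sequence of positive real numbers and let (aⱼ)_{j≥1} be a sequence of real numbers such that Σⱼ |aⱼ| < ∞ and Σⱼ aⱼ bⱼ > 0. Then there exists a finite N ∈ ℕ such that Σ_{j=1}^{N} aⱼ > 0. -/
open Finset

/-- Abel summation writes `∑_{j<n} aⱼ bⱼ` as `b_{n-1} A_n + ∑_{i<n-1} (bᵢ - b_{i+1}) A_{i+1}` with
`A_k = ∑_{j<k} aⱼ`, a combination of the partial sums with nonnegative weights. -/
theorem sum_range_mul_nonpos_of_antitone {R : Type*} [CommRing R] [LinearOrder R]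
    [IsStrictOrderedRing R] {a b : ℕ → R} (hb₀ : ∀ j, 0 ≤ b j) (hb : Antitone b)
    (ha : ∀ n, ∑ j ∈ range n, a j ≤ 0) (n : ℕ) :
    ∑ j ∈ range n, a j * b j ≤ 0 := by
  have hparts := sum_range_by_parts b a n
  simp only [smul_eq_mul] at hparts
  have hlast : b (n - 1) * ∑ j ∈ range n, a j ≤ 0 := mul_nonpos_of_nonneg_of_nonpos (hb₀ _) (ha n)
  have hsteps : 0 ≤ ∑ i ∈ range (n - 1), (b (i + 1) - b i) * ∑ j ∈ range (i + 1), a j :=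
    sum_nonneg fun i _ ↦
      mul_nonneg_of_nonpos_of_nonpos (sub_nonpos.2 (hb i.le_succ)) (ha (i + 1))
  simp only [mul_comm (a _)]
  rw [hparts]
  linarith

/-- If `(bⱼ)` is a non-increasing sequence of positive reals and `(aⱼ)` is
absolutely summable with `Σⱼ aⱼ bⱼ > 0`, then some finite partial sum of `(aⱼ)` is positive. -/
theorem statement_13
    (a b : ℕ → ℝ)
    (hbpos : ∀ j, 0 < b j)
    (hbanti : Antitone b)
    (ha : Summable fun j => |a j|)
    (hab : 0 < ∑' j, a j * b j) :
    ∃ N : ℕ, 0 < ∑ j ∈ Finset.range N, a j := by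
  by_contra! hA
  have hsum : Summable fun j ↦ a j * b j := by
    refine .of_norm_bounded (ha.mul_right (b 0)) fun j ↦ ?_
    rw [Real.norm_eq_abs, abs_mul, abs_of_pos (hbpos j)]
    exact mul_le_mul_of_nonneg_left (hbanti j.zero_le) (abs_nonneg _)
  have := hsum.tsum_le_of_sum_range_le
    (sum_range_mul_nonpos_of_antitone (fun j ↦ (hbpos j).le) hbanti hA)
  linarith
end

section
/- Let H be an infinite-dimensional real separable Hilbert space, let A and B be positive, self-adjoint, trace-class operators on H, and let 0 ≤ α ≤ 1. Then det(I + αA + (1−α)B) ≥ det(I + A)^α · det(I + B)^{1−α}. Moreover, for 0 < α < 1, equality holds if and only if A = B. -/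
/-!
Let `φ` be an eigenbasis of `M = αA + (1-α)B`. The squared overlaps `⟪ψ j, φ i⟫ ^ 2` of two
Hilbert bases form a doubly stochastic matrix, and the diagonal entry `⟪A (φ i), φ i⟫` is the
average of the eigenvalues of `A` against its `i`-th row. Jensen's inequality for the concave
function `log (1 + ·)`, summed over `i`, gives the Hadamard-type bound
`∑ log (1 + a j) ≤ ∑ log (1 + ⟪A (φ i), φ i⟫)`, strict unless every `φ i` is an eigenvector of `A`.
Concavity once more gives
`α log (1 + ⟪A (φ i), φ i⟫) + (1 - α) log (1 + ⟪B (φ i), φ i⟫) ≤ log (1 + m i)`, strict unless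
the two diagonal entries differ. Summing and exponentiating proves the inequality; for
`0 < α < 1`, equality forces every `φ i` to be an eigenvector of `A` and of `B` with the same
eigenvalue, that is `A = B`. Conversely, the Hadamard bound applied in both directions between two
eigenbases of the same operator shows that its log-determinant does not depend on the eigenbasis.
-/

open Real
open scoped RealInnerProductSpace

theorem log_le_log_add_div_sub_one {x c : ℝ} (hx : 0 < x) (hc : 0 < c) :
    log x ≤ log c + x / c - 1 := by
  have := log_le_sub_one_of_pos (div_pos hx hc)
  rw [log_div hx.ne' hc.ne'] at this
  linarith

theorem log_lt_log_add_div_sub_one {x c : ℝ} (hx : 0 < x) (hc : 0 < c) (hxc : x ≠ c) :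
    log x < log c + x / c - 1 := by
  have := log_lt_sub_one_of_pos (div_pos hx hc) (by rwa [ne_eq, div_eq_one_iff_eq hc.ne'])
  rw [log_div hx.ne' hc.ne'] at this
  linarith

theorem log_one_add_convexComb_le {x y α : ℝ} (hx : 0 ≤ x) (hy : 0 ≤ y) (hα0 : 0 ≤ α)
    (hα1 : α ≤ 1) : α * log (1 + x) + (1 - α) * log (1 + y) ≤ log (1 + (α * x + (1 - α) * y)) := by
  have := strictConcaveOn_log_Ioi.concaveOn.2 (x := 1 + x) (y := 1 + y)
    (by simp only [Set.mem_Ioi]; linarith) (by simp only [Set.mem_Ioi]; linarith)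
    hα0 (sub_nonneg.2 hα1) (add_sub_cancel α 1)
  simp only [smul_eq_mul] at this
  rwa [show 1 + (α * x + (1 - α) * y) = α * (1 + x) + (1 - α) * (1 + y) by ring]

theorem log_one_add_convexComb_lt {x y α : ℝ} (hx : 0 ≤ x) (hy : 0 ≤ y) (hxy : x ≠ y)
    (hα0 : 0 < α) (hα1 : α < 1) :
    α * log (1 + x) + (1 - α) * log (1 + y) < log (1 + (α * x + (1 - α) * y)) := by
  have := strictConcaveOn_log_Ioi.2 (x := 1 + x) (y := 1 + y)
    (by simp only [Set.mem_Ioi]; linarith) (by simp only [Set.mem_Ioi]; linarith)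
    (by simpa using hxy) hα0 (sub_pos.2 hα1) (add_sub_cancel α 1)
  simp only [smul_eq_mul] at this
  rwa [show 1 + (α * x + (1 - α) * y) = α * (1 + x) + (1 - α) * (1 + y) by ring]

section Sequences

variable {ι κ : Type*}

theorem summable_mul_log_one_add {q a : κ → ℝ} (hq0 : ∀ j, 0 ≤ q j) (ha0 : ∀ j, 0 ≤ a j)
    (hqa : Summable fun j => q j * a j) : Summable fun j => q j * log (1 + a j) := by
  refine .of_nonneg_of_le (fun j => mul_nonneg (hq0 j) (log_nonneg (by linarith [ha0 j])))
    (fun j => mul_le_mul_of_nonneg_left ?_ (hq0 j)) hqa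
  linarith [log_le_sub_one_of_pos (show 0 < 1 + a j by linarith [ha0 j])]

theorem hasSum_mul_log_tangent {q a : κ → ℝ} {d : ℝ} (hq : HasSum q 1)
    (hd : HasSum (fun j => q j * a j) d) (hd1 : 0 < 1 + d) :
    HasSum (fun j => q j * (log (1 + d) + (1 + a j) / (1 + d) - 1)) (log (1 + d)) := by
  have h := (hq.mul_right (log (1 + d) - 1)).add ((hq.add hd).div_const (1 + d))
  rw [one_mul, div_self hd1.ne', sub_add_cancel] at h
  refine (congrArg (HasSum · _) (funext fun j => ?_)).mpr h
  ring

theorem tsum_mul_log_one_add_le {q a : κ → ℝ} {d : ℝ} (hq0 : ∀ j, 0 ≤ q j) (hq : HasSum q 1)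
    (ha0 : ∀ j, 0 ≤ a j) (hd : HasSum (fun j => q j * a j) d) :
    ∑' j, q j * log (1 + a j) ≤ log (1 + d) := by
  have hd0 : 0 ≤ d := hasSum_le (fun j => mul_nonneg (hq0 j) (ha0 j)) hasSum_zero hd
  have hT := hasSum_mul_log_tangent hq hd (by linarith)
  refine hT.tsum_eq ▸ (summable_mul_log_one_add hq0 ha0 hd.summable).tsum_le_tsum
    (fun j => mul_le_mul_of_nonneg_left ?_ (hq0 j)) hT.summable
  exact log_le_log_add_div_sub_one (by linarith [ha0 j]) (by linarith)

theorem tsum_mul_log_one_add_lt {q a : κ → ℝ} {d : ℝ} (hq0 : ∀ j, 0 ≤ q j) (hq : HasSum q 1)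
    (ha0 : ∀ j, 0 ≤ a j) (hd : HasSum (fun j => q j * a j) d) {j : κ} (hqj : q j ≠ 0)
    (hne : a j ≠ d) : ∑' j, q j * log (1 + a j) < log (1 + d) := by
  have hd0 : 0 ≤ d := hasSum_le (fun j => mul_nonneg (hq0 j) (ha0 j)) hasSum_zero hd
  have hT := hasSum_mul_log_tangent hq hd (by linarith)
  refine hT.tsum_eq ▸ Summable.tsum_lt_tsum (i := j)
    (fun k => mul_le_mul_of_nonneg_left ?_ (hq0 k)) ?_
    (summable_mul_log_one_add hq0 ha0 hd.summable) hT.summable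
  · exact log_le_log_add_div_sub_one (by linarith [ha0 k]) (by linarith)
  · refine mul_lt_mul_of_pos_left ?_ ((hq0 j).lt_of_ne' hqj)
    exact log_lt_log_add_div_sub_one (by linarith [ha0 j]) (by linarith) (by simpa using hne)

theorem tsum_log_one_add_convexComb_le {x y : ι → ℝ} (hx0 : ∀ i, 0 ≤ x i) (hy0 : ∀ i, 0 ≤ y i)
    (hx : Summable x) (hy : Summable y) {α : ℝ} (hα0 : 0 ≤ α) (hα1 : α ≤ 1) :
    α * ∑' i, log (1 + x i) + (1 - α) * ∑' i, log (1 + y i) ≤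
      ∑' i, log (1 + (α * x i + (1 - α) * y i)) := by
  have hlx := (summable_log_one_add_of_summable hx).mul_left α
  have hly := (summable_log_one_add_of_summable hy).mul_left (1 - α)
  rw [← tsum_mul_left, ← tsum_mul_left, ← hlx.tsum_add hly]
  exact (hlx.add hly).tsum_le_tsum (fun i => log_one_add_convexComb_le (hx0 i) (hy0 i) hα0 hα1)
    (summable_log_one_add_of_summable ((hx.mul_left α).add (hy.mul_left _)))

theorem tsum_log_one_add_convexComb_lt {x y : ι → ℝ} (hx0 : ∀ i, 0 ≤ x i) (hy0 : ∀ i, 0 ≤ y i)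
    (hx : Summable x) (hy : Summable y) {i : ι} (hxy : x i ≠ y i) {α : ℝ} (hα0 : 0 < α)
    (hα1 : α < 1) :
    α * ∑' i, log (1 + x i) + (1 - α) * ∑' i, log (1 + y i) <
      ∑' i, log (1 + (α * x i + (1 - α) * y i)) := by
  have hlx := (summable_log_one_add_of_summable hx).mul_left α
  have hly := (summable_log_one_add_of_summable hy).mul_left (1 - α)
  rw [← tsum_mul_left, ← tsum_mul_left, ← hlx.tsum_add hly]
  exact Summable.tsum_lt_tsum
    (fun i => log_one_add_convexComb_le (hx0 i) (hy0 i) hα0.le hα1.le)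
    (log_one_add_convexComb_lt (hx0 i) (hy0 i) hxy hα0 hα1) (hlx.add hly)
    (summable_log_one_add_of_summable ((hx.mul_left α).add (hy.mul_left _)))

theorem tprod_one_add_eq_exp_tsum_log {x : ι → ℝ} (hx0 : ∀ i, 0 ≤ x i) (hx : Summable x) :
    ∏' i, (1 + x i) = exp (∑' i, log (1 + x i)) :=
  (rexp_tsum_eq_tprod (fun i => by linarith [hx0 i]) (summable_log_one_add_of_summable hx)).symm

structure IsDoublyStochastic (q : ι → κ → ℝ) : Prop where
  nonneg : ∀ i j, 0 ≤ q i j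
  hasSum_row : ∀ i, HasSum (q i) 1
  hasSum_col : ∀ j, HasSum (fun i => q i j) 1

namespace IsDoublyStochastic

variable {q : ι → κ → ℝ} {a : κ → ℝ}

theorem hasSum_tsum_mul (hq : IsDoublyStochastic q) (ha0 : ∀ j, 0 ≤ a j) (ha : Summable a) :
    HasSum (fun i => ∑' j, q i j * a j) (∑' j, a j) := by
  have hcol (j : κ) : HasSum (fun i => q i j * a j) (a j) := by
    simpa using (hq.hasSum_col j).mul_right (a j)
  have hsum : Summable fun p : κ × ι => q p.2 p.1 * a p.1 :=
    (summable_prod_of_nonneg fun p => mul_nonneg (hq.nonneg _ _) (ha0 _)).2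
      ⟨fun j => (hcol j).summable, by simpa only [(hcol _).tsum_eq] using ha⟩
  have htot : HasSum (fun p : κ × ι => q p.2 p.1 * a p.1) (∑' j, a j) := by
    rw [(hsum.hasSum.prod_fiberwise hcol).tsum_eq]
    exact hsum.hasSum
  have hswap := (Equiv.prodComm ι κ).hasSum_iff.2 htot
  exact hswap.prod_fiberwise fun i => (hswap.summable.prod_factor i).hasSum

theorem summable_mul (hq : IsDoublyStochastic q) (ha0 : ∀ j, 0 ≤ a j) (ha : Summable a)
    (i : ι) : Summable fun j => q i j * a j :=
  .of_nonneg_of_le (fun j => mul_nonneg (hq.nonneg i j) (ha0 j))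
    (fun j => mul_le_of_le_one_left (ha0 j)
      (le_hasSum (hq.hasSum_row i) j fun k _ => hq.nonneg i k)) ha

theorem tsum_log_one_add_le (hq : IsDoublyStochastic q) (ha0 : ∀ j, 0 ≤ a j) (ha : Summable a) :
    ∑' j, log (1 + a j) ≤ ∑' i, log (1 + ∑' j, q i j * a j) := by
  have hL := hq.hasSum_tsum_mul (fun j => log_nonneg (by linarith [ha0 j]))
    (summable_log_one_add_of_summable ha)
  rw [← hL.tsum_eq]
  exact hL.summable.tsum_le_tsum
    (fun i => tsum_mul_log_one_add_le (hq.nonneg i) (hq.hasSum_row i) ha0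
      (hq.summable_mul ha0 ha i).hasSum)
    (summable_log_one_add_of_summable (hq.hasSum_tsum_mul ha0 ha).summable)

theorem tsum_log_one_add_lt (hq : IsDoublyStochastic q) (ha0 : ∀ j, 0 ≤ a j) (ha : Summable a)
    {i : ι} {j : κ} (hqij : q i j ≠ 0) (hne : a j ≠ ∑' j, q i j * a j) :
    ∑' j, log (1 + a j) < ∑' i, log (1 + ∑' j, q i j * a j) := by
  have hL := hq.hasSum_tsum_mul (fun j => log_nonneg (by linarith [ha0 j]))
    (summable_log_one_add_of_summable ha)
  rw [← hL.tsum_eq]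
  exact Summable.tsum_lt_tsum (i := i)
    (fun i => tsum_mul_log_one_add_le (hq.nonneg i) (hq.hasSum_row i) ha0
      (hq.summable_mul ha0 ha i).hasSum)
    (tsum_mul_log_one_add_lt (hq.nonneg i) (hq.hasSum_row i) ha0
      (hq.summable_mul ha0 ha i).hasSum hqij hne)
    hL.summable (summable_log_one_add_of_summable (hq.hasSum_tsum_mul ha0 ha).summable)

end IsDoublyStochastic

end Sequences

namespace HilbertBasis

variable {ι κ H : Type*} [NormedAddCommGroup H] [InnerProductSpace ℝ H]

theorem isDoublyStochastic_inner_sq (φ : HilbertBasis ι ℝ H) (ψ : HilbertBasis κ ℝ H) :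
    IsDoublyStochastic fun i j => ⟪ψ j, φ i⟫ ^ 2 where
  nonneg _ _ := sq_nonneg _
  hasSum_row i := by
    simpa [sq, real_inner_comm, real_inner_self_eq_norm_sq, φ.orthonormal.1 i]
      using ψ.hasSum_inner_mul_inner (φ i) (φ i)
  hasSum_col j := by
    simpa [sq, real_inner_comm, real_inner_self_eq_norm_sq, ψ.orthonormal.1 j]
      using φ.hasSum_inner_mul_inner (ψ j) (ψ j)

theorem ext_continuousLinearMap (ψ : HilbertBasis κ ℝ H) {A B : H →L[ℝ] H}
    (h : ∀ j, A (ψ j) = B (ψ j)) : A = B :=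
  ContinuousLinearMap.ext_on (Submodule.dense_iff_topologicalClosure_eq_top.2 ψ.dense_span)
    (Set.forall_mem_range.2 h)

variable {A : H →L[ℝ] H} {a : κ → ℝ} (ψ : HilbertBasis κ ℝ H)

theorem inner_apply_self_of_eigen (hA : ∀ j, A (ψ j) = a j • ψ j) (j : κ) :
    ⟪A (ψ j), ψ j⟫ = a j := by
  simp [hA j, real_inner_smul_left, ψ.orthonormal.1 j]

theorem hasSum_inner_apply_self_of_eigen (hA : ∀ j, A (ψ j) = a j • ψ j) (x : H) :
    HasSum (fun j => ⟪ψ j, x⟫ ^ 2 * a j) ⟪A x, x⟫ := by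
  have h := (ψ.hasSum_repr x).mapL ((innerSL ℝ x).comp A)
  simp only [ContinuousLinearMap.comp_apply, map_smul, hA, innerSL_apply_apply,
    ψ.repr_apply_apply, smul_eq_mul] at h
  rw [real_inner_comm x (A x)]
  refine (congrArg (HasSum · _) (funext fun j => ?_)).mpr h
  rw [real_inner_comm x (ψ j)]
  ring

theorem apply_eq_smul_of_eigen (hA : ∀ j, A (ψ j) = a j • ψ j) {v : H} {c : ℝ}
    (h : ∀ j, ⟪ψ j, v⟫ ≠ 0 → a j = c) :
    A v = c • v := by
  refine ((ψ.hasSum_repr v).mapL A).unique ?_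
  convert (ψ.hasSum_repr v).const_smul c using 2 with j
  rw [map_smul, hA j, ψ.repr_apply_apply, smul_comm]
  by_cases hj : ⟪ψ j, v⟫ = 0
  · simp [hj]
  · rw [h j hj]

theorem inner_apply_self_nonneg (hA : ∀ j, A (ψ j) = a j • ψ j) (ha0 : ∀ j, 0 ≤ a j) (x : H) :
    0 ≤ ⟪A x, x⟫ :=
  (ψ.hasSum_inner_apply_self_of_eigen hA x).nonneg fun j => mul_nonneg (sq_nonneg _) (ha0 j)

theorem summable_inner_apply_self (hA : ∀ j, A (ψ j) = a j • ψ j) (ha0 : ∀ j, 0 ≤ a j)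
    (ha : Summable a) (φ : HilbertBasis ι ℝ H) : Summable fun i => ⟪A (φ i), φ i⟫ := by
  simpa only [(ψ.hasSum_inner_apply_self_of_eigen hA _).tsum_eq]
    using ((φ.isDoublyStochastic_inner_sq ψ).hasSum_tsum_mul ha0 ha).summable

theorem tsum_log_one_add_le_of_eigen (hA : ∀ j, A (ψ j) = a j • ψ j) (ha0 : ∀ j, 0 ≤ a j)
    (ha : Summable a) (φ : HilbertBasis ι ℝ H) :
    ∑' j, log (1 + a j) ≤ ∑' i, log (1 + ⟪A (φ i), φ i⟫) := by
  simpa only [(ψ.hasSum_inner_apply_self_of_eigen hA _).tsum_eq]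
    using (φ.isDoublyStochastic_inner_sq ψ).tsum_log_one_add_le ha0 ha

theorem tsum_log_one_add_lt_of_eigen (hA : ∀ j, A (ψ j) = a j • ψ j) (ha0 : ∀ j, 0 ≤ a j)
    (ha : Summable a) (φ : HilbertBasis ι ℝ H) {i : ι} (hi : A (φ i) ≠ ⟪A (φ i), φ i⟫ • φ i) :
    ∑' j, log (1 + a j) < ∑' i, log (1 + ⟪A (φ i), φ i⟫) := by
  obtain ⟨j, hj, hne⟩ : ∃ j, ⟪ψ j, φ i⟫ ≠ 0 ∧ a j ≠ ⟪A (φ i), φ i⟫ := by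
    by_contra! h
    exact hi (ψ.apply_eq_smul_of_eigen hA h)
  have hd (x : H) := (ψ.hasSum_inner_apply_self_of_eigen hA x).tsum_eq
  simpa only [hd] using (φ.isDoublyStochastic_inner_sq ψ).tsum_log_one_add_lt ha0 ha
    (pow_ne_zero 2 hj) (by rwa [hd])

theorem tsum_log_one_add_eq_of_eigen (hA : ∀ j, A (ψ j) = a j • ψ j) (ha0 : ∀ j, 0 ≤ a j)
    (ha : Summable a) (φ : HilbertBasis ι ℝ H) {a' : ι → ℝ} (hA' : ∀ i, A (φ i) = a' i • φ i)
    (ha'0 : ∀ i, 0 ≤ a' i) (ha' : Summable a') :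
    ∑' j, log (1 + a j) = ∑' i, log (1 + a' i) := by
  have h := ψ.tsum_log_one_add_le_of_eigen hA ha0 ha φ
  have h' := φ.tsum_log_one_add_le_of_eigen hA' ha'0 ha' ψ
  simp only [φ.inner_apply_self_of_eigen hA', ψ.inner_apply_self_of_eigen hA] at h h'
  exact h.antisymm h'

end HilbertBasis

section KyFan

variable {ι κ κ' H : Type*} [NormedAddCommGroup H] [InnerProductSpace ℝ H]
  {A B : H →L[ℝ] H} {a : κ → ℝ} {b : κ' → ℝ} {α : ℝ}

theorem inner_convexComb_apply_self (x : H) :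
    ⟪(α • A + (1 - α) • B) x, x⟫ = α * ⟪A x, x⟫ + (1 - α) * ⟪B x, x⟫ := by
  simp [inner_add_left, real_inner_smul_left]

theorem kyFan_log_le (ψA : HilbertBasis κ ℝ H) (hA : ∀ j, A (ψA j) = a j • ψA j)
    (ha0 : ∀ j, 0 ≤ a j) (ha : Summable a) (ψB : HilbertBasis κ' ℝ H)
    (hB : ∀ j, B (ψB j) = b j • ψB j) (hb0 : ∀ j, 0 ≤ b j) (hb : Summable b)
    (φ : HilbertBasis ι ℝ H) (hα0 : 0 ≤ α) (hα1 : α ≤ 1) :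
    α * ∑' j, log (1 + a j) + (1 - α) * ∑' j, log (1 + b j) ≤
      ∑' i, log (1 + ⟪(α • A + (1 - α) • B) (φ i), φ i⟫) := by
  have h1α : 0 ≤ 1 - α := sub_nonneg.2 hα1
  simp only [inner_convexComb_apply_self]
  calc _ ≤ α * ∑' i, log (1 + ⟪A (φ i), φ i⟫) + (1 - α) * ∑' i, log (1 + ⟪B (φ i), φ i⟫) := by
        gcongr
        · exact ψA.tsum_log_one_add_le_of_eigen hA ha0 ha φ
        · exact ψB.tsum_log_one_add_le_of_eigen hB hb0 hb φ
    _ ≤ _ := tsum_log_one_add_convexComb_le (fun i => ψA.inner_apply_self_nonneg hA ha0 _)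
        (fun i => ψB.inner_apply_self_nonneg hB hb0 _) (ψA.summable_inner_apply_self hA ha0 ha φ)
        (ψB.summable_inner_apply_self hB hb0 hb φ) hα0 hα1

theorem kyFan_log_lt (ψA : HilbertBasis κ ℝ H) (hA : ∀ j, A (ψA j) = a j • ψA j)
    (ha0 : ∀ j, 0 ≤ a j) (ha : Summable a) (ψB : HilbertBasis κ' ℝ H)
    (hB : ∀ j, B (ψB j) = b j • ψB j) (hb0 : ∀ j, 0 ≤ b j) (hb : Summable b)
    (φ : HilbertBasis ι ℝ H) (hα0 : 0 < α) (hα1 : α < 1) {i : ι} (hi : A (φ i) ≠ B (φ i)) :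
    α * ∑' j, log (1 + a j) + (1 - α) * ∑' j, log (1 + b j) <
      ∑' i, log (1 + ⟪(α • A + (1 - α) • B) (φ i), φ i⟫) := by
  have h1α : 0 < 1 - α := sub_pos.2 hα1
  have hLA := mul_le_mul_of_nonneg_left (ψA.tsum_log_one_add_le_of_eigen hA ha0 ha φ) hα0.le
  have hLB := mul_le_mul_of_nonneg_left (ψB.tsum_log_one_add_le_of_eigen hB hb0 hb φ) h1α.le
  have hconcave := tsum_log_one_add_convexComb_le (fun i => ψA.inner_apply_self_nonneg hA ha0 _)
    (fun i => ψB.inner_apply_self_nonneg hB hb0 _) (ψA.summable_inner_apply_self hA ha0 ha φ)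
    (ψB.summable_inner_apply_self hB hb0 hb φ) hα0.le hα1.le
  simp only [inner_convexComb_apply_self]
  by_cases hd : ⟪A (φ i), φ i⟫ = ⟪B (φ i), φ i⟫
  · have : A (φ i) ≠ ⟪A (φ i), φ i⟫ • φ i ∨ B (φ i) ≠ ⟪B (φ i), φ i⟫ • φ i := by
      by_contra! h
      exact hi (by rw [h.1, h.2, hd])
    rcases this with hA' | hB'
    · have := mul_lt_mul_of_pos_left (ψA.tsum_log_one_add_lt_of_eigen hA ha0 ha φ hA') hα0
      linarith
    · have := mul_lt_mul_of_pos_left (ψB.tsum_log_one_add_lt_of_eigen hB hb0 hb φ hB') h1α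
      linarith
  · have := tsum_log_one_add_convexComb_lt (fun i => ψA.inner_apply_self_nonneg hA ha0 _)
      (fun i => ψB.inner_apply_self_nonneg hB hb0 _) (ψA.summable_inner_apply_self hA ha0 ha φ)
      (ψB.summable_inner_apply_self hB hb0 hb φ) hd hα0 hα1
    linarith

end KyFan

theorem statement_16_general
    {H : Type*} [NormedAddCommGroup H] [InnerProductSpace ℝ H]
    (A B : H →L[ℝ] H)
    (α : ℝ) (hα0 : 0 ≤ α) (hα1 : α ≤ 1)
    (ψA : HilbertBasis ℕ ℝ H) (a : ℕ → ℝ)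
    (ha0 : ∀ j, 0 ≤ a j) (haS : Summable a)
    (hAeig : ∀ j, A (ψA j) = a j • ψA j)
    (ψB : HilbertBasis ℕ ℝ H) (b : ℕ → ℝ)
    (hb0 : ∀ j, 0 ≤ b j) (hbS : Summable b)
    (hBeig : ∀ j, B (ψB j) = b j • ψB j)
    (ψM : HilbertBasis ℕ ℝ H) (m : ℕ → ℝ)
    (hm0 : ∀ j, 0 ≤ m j) (hmS : Summable m)
    (hMeig : ∀ j, (α • A + (1 - α) • B) (ψM j) = m j • ψM j) :
    (∏' j, (1 + a j)) ^ α * (∏' j, (1 + b j)) ^ (1 - α) ≤ ∏' j, (1 + m j) ∧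
    (0 < α → α < 1 →
      ((∏' j, (1 + a j)) ^ α * (∏' j, (1 + b j)) ^ (1 - α) = ∏' j, (1 + m j) ↔ A = B)) := by
  have hM := ψM.inner_apply_self_of_eigen hMeig
  rw [tprod_one_add_eq_exp_tsum_log ha0 haS, tprod_one_add_eq_exp_tsum_log hb0 hbS,
    tprod_one_add_eq_exp_tsum_log hm0 hmS, ← exp_mul, ← exp_mul, ← exp_add, mul_comm _ α,
    mul_comm _ (1 - α)]
  refine ⟨exp_le_exp.2 ?_, fun hα0' hα1' => ⟨fun heq => ?_, ?_⟩⟩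
  · simpa only [hM] using kyFan_log_le ψA hAeig ha0 haS ψB hBeig hb0 hbS ψM hα0 hα1
  · refine ψM.ext_continuousLinearMap fun i => ?_
    by_contra hi
    have := kyFan_log_lt ψA hAeig ha0 haS ψB hBeig hb0 hbS ψM hα0' hα1' hi
    simp only [hM] at this
    exact this.ne (exp_injective heq)
  · rintro rfl
    rw [← add_smul, add_sub_cancel, one_smul] at hMeig
    rw [ψA.tsum_log_one_add_eq_of_eigen hAeig ha0 haS ψM hMeig hm0 hmS,
      ψB.tsum_log_one_add_eq_of_eigen hBeig hb0 hbS ψM hMeig hm0 hmS, ← add_mul, add_sub_cancel,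
      one_mul]

/-- (Infinite-dimensional Ky Fan inequality.) For positive, self-adjoint,
trace-class operators `A`, `B` on an infinite-dimensional real separable Hilbert space (given by
their spectral decompositions, with `(mⱼ)` the eigenvalues of `αA + (1−α)B`) and `0 ≤ α ≤ 1`,
`det(I + αA + (1−α)B) ≥ det(I + A)^α · det(I + B)^{1−α}`; moreover, for `0 < α < 1`, equality
holds if and only if `A = B`. Here `det(I+T) = ∏ⱼ (1 + λⱼ(T))`. -/
theorem statement_16
    {H : Type*} [NormedAddCommGroup H] [InnerProductSpace ℝ H]
    [CompleteSpace H] [SecondCountableTopology H]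
    (hinf : ¬ FiniteDimensional ℝ H)
    (A B : H →L[ℝ] H)
    (α : ℝ) (hα0 : 0 ≤ α) (hα1 : α ≤ 1)
    (ψA : HilbertBasis ℕ ℝ H) (a : ℕ → ℝ)
    (ha0 : ∀ j, 0 ≤ a j) (haS : Summable a)
    (hAeig : ∀ j, A (ψA j) = a j • ψA j)
    (ψB : HilbertBasis ℕ ℝ H) (b : ℕ → ℝ)
    (hb0 : ∀ j, 0 ≤ b j) (hbS : Summable b)
    (hBeig : ∀ j, B (ψB j) = b j • ψB j)
    (ψM : HilbertBasis ℕ ℝ H) (m : ℕ → ℝ)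
    (hm0 : ∀ j, 0 ≤ m j) (hmS : Summable m)
    (hMeig : ∀ j, (α • A + (1 - α) • B) (ψM j) = m j • ψM j) :
    (∏' j, (1 + a j)) ^ α * (∏' j, (1 + b j)) ^ (1 - α) ≤ ∏' j, (1 + m j) ∧
    (0 < α → α < 1 →
      ((∏' j, (1 + a j)) ^ α * (∏' j, (1 + b j)) ^ (1 - α) = ∏' j, (1 + m j) ↔ A = B)) :=
  statement_16_general A B α hα0 hα1 ψA a ha0 haS hAeig ψB b hb0 hbS hBeig ψM m hm0 hmS hMeig
end

section
/- Let H be a real separable Hilbert space, σ > 0, and let P = 𝒩(μ, C) be a Gaussian measure on H whose covariance operator C has eigenvalues (λⱼ) with corresponding orthonormal basis of eigenvectors (ψⱼ). Then for every x ∈ H, log ∫_H e^{-σ‖x−y‖²} dP(y) = − Σⱼ ( σ/(1 + 2σλⱼ) ) ⟨x − μ, ψⱼ⟩² − (1/2) Σⱼ log(1 + 2σλⱼ), where both series converge. Consequently, for n i.i.d. observations y₁,…,yₙ, the log kernel mean of the n-fold product measure with the Gaussian product kernel equals Σᵢ Σⱼ (−σ/(1+2σλⱼ)) ⟨yᵢ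 − μ, ψⱼ⟩² − (n/2) Σⱼ log(1 + 2σλⱼ). -/
open MeasureTheory Filter
open scoped RealInnerProductSpace NNReal

noncomputable section

/-- `P` is the Gaussian measure `𝒩(μ, C)` on a real Hilbert space: every one-dimensional
projection `y ↦ ⟪a, y⟫` pushes `P` forward to the real normal distribution
`N(⟪a, μ⟫, ⟪C a, a⟫)`. -/
def IsGaussian {H : Type*} [NormedAddCommGroup H] [InnerProductSpace ℝ H]
    [MeasurableSpace H] (P : Measure H) (μ : H) (C : H →L[ℝ] H) : Prop :=
  ∀ a : H, P.map (fun y => ⟪a, y⟫)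
    = ProbabilityTheory.gaussianReal ⟪a, μ⟫ (⟪C a, a⟫).toNNReal

/-!
Under `P` the coordinates `⟪ψⱼ, y⟫`, `j < N`, are independent with laws `N(⟪ψⱼ, μ⟫, λⱼ)`: the
characteristic function of their joint law at `t` is that of `P` along `∑ⱼ tⱼ ψⱼ`, which
factorises because the `ψⱼ` are orthonormal eigenvectors of `C`. The truncated kernel
`exp (-σ ∑_{j<N} ⟪x - y, ψⱼ⟫²)` is a product of functions of these coordinates, so its integral
is a product of one-dimensional Gaussian integrals, each computed by completing the square.
Parseval's identity and dominated convergence then let `N → ∞`.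
-/

open Real Topology
open ProbabilityTheory (gaussianReal gaussianPDFReal)

lemma integral_exp_neg_mul_sub_sq_gaussianReal {σ : ℝ} (c m : ℝ) {v : ℝ≥0}
    (hv : 0 < 1 + 2 * σ * v) :
    ∫ z, exp (-σ * (c - z) ^ 2) ∂gaussianReal m v
      = exp (-(σ / (1 + 2 * σ * v) * (c - m) ^ 2) - 1 / 2 * log (1 + 2 * σ * v)) := by
  rcases eq_or_ne v 0 with rfl | hv0
  · simp [ProbabilityTheory.gaussianReal_zero_var]
  set D := 1 + 2 * σ * v
  have hvpos : (0 : ℝ) < v := by positivity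
  let v' : ℝ≥0 := ⟨v / D, by positivity⟩
  have hv' : (v' : ℝ) = v / D := rfl
  have hv'0 : v' ≠ 0 := by
    rw [← NNReal.coe_ne_zero, hv']; exact (div_pos hvpos hv).ne'
  have hsqrtD : exp (1 / 2 * log D) = √D := by
    rw [Real.sqrt_eq_rpow, Real.rpow_def_of_pos hv, mul_comm]
  have hsqrt : √(2 * π * v') = √(2 * π * v) / √D := by
    rw [← Real.sqrt_div' _ hv.le, hv', mul_div_assoc]
  have key : ∀ z, gaussianPDFReal m v z • exp (-σ * (c - z) ^ 2)
      = exp (-(σ / D * (c - m) ^ 2) - 1 / 2 * log D)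
        * gaussianPDFReal ((m + 2 * σ * v * c) / D) v' z := by
    intro z
    calc gaussianPDFReal m v z • exp (-σ * (c - z) ^ 2)
        = (√(2 * π * v))⁻¹ * exp (-(z - m) ^ 2 / (2 * v) + -σ * (c - z) ^ 2) := by
          rw [exp_add, smul_eq_mul, ProbabilityTheory.gaussianPDFReal]; ring
      _ = (√(2 * π * v))⁻¹ * exp (-(σ / D * (c - m) ^ 2)
            + -(z - (m + 2 * σ * v * c) / D) ^ 2 / (2 * v')) := by
          congr 2; rw [hv']; field_simp; ring
      _ = _ := by
          rw [exp_add, exp_sub, hsqrtD, ProbabilityTheory.gaussianPDFReal, hsqrt]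
          field_simp
  rw [ProbabilityTheory.integral_gaussianReal_eq_integral_smul hv0]
  simp_rw [key]
  rw [integral_const_mul, ProbabilityTheory.integral_gaussianPDFReal_eq_one _ hv'0, mul_one]

namespace IsGaussian

variable {H : Type*} [NormedAddCommGroup H] [InnerProductSpace ℝ H] [MeasurableSpace H]
  [BorelSpace H] {P : Measure H} {μ : H} {C : H →L[ℝ] H}

lemma map_inner_eq_pi {ι : Type*} [Fintype ι] [IsFiniteMeasure P] (hP : IsGaussian P μ C)
    {v : ι → H} (hv : Orthonormal ℝ v) {lam : ι → ℝ} (hlam : ∀ i, 0 ≤ lam i)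
    (heig : ∀ i, C (v i) = lam i • v i) :
    P.map (fun y i => ⟪v i, y⟫) = Measure.pi fun i => gaussianReal ⟪v i, μ⟫ (lam i).toNNReal := by
  classical
  let T : H →L[ℝ] ι → ℝ := ContinuousLinearMap.pi fun i => innerSL ℝ (v i)
  change P.map T = _
  refine Measure.ext_of_charFunDual (funext fun L => ?_)
  set t : ι → ℝ := fun i => L (Pi.single i 1)
  set a : H := ∑ i, t i • v i
  have hL : ∀ w, L w = ∑ i, w i * t i := by
    intro w
    conv_lhs => rw [pi_eq_sum_univ' w]
    simp [t]
  have hLT : L.comp T = innerSL ℝ a := by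
    ext y
    simp [hL, a, T, mul_comm]
  have hCa : ⟪C a, a⟫ = ∑ i, lam i * t i ^ 2 := by
    simp only [a, map_sum, map_smul, heig, smul_smul, sum_inner, real_inner_smul_left,
      hv.inner_right_fintype]
    exact Finset.sum_congr rfl fun i _ => by ring
  have hmap : P.map (innerSL ℝ a) = gaussianReal ⟪a, μ⟫ (⟪C a, a⟫).toNNReal := hP a
  simp_rw [charFunDual_map, charFunDual_pi, hLT, charFunDual_eq_charFun_map_one, hmap,
    ProbabilityTheory.gaussianReal_map_continuousLinearMap, ProbabilityTheory.charFun_gaussianReal,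
    ← Complex.exp_sum]
  congr 1
  have hmean : ⟪a, μ⟫ = ∑ i, t i * ⟪v i, μ⟫ := by simp [a, sum_inner, real_inner_smul_left]
  have hsingle : ∀ i r, (L.comp (.single ℝ (fun _ => ℝ) i)) r = r * t i := fun i r => by
    rw [ContinuousLinearMap.comp_apply, ContinuousLinearMap.single_apply, hL]
    simp [Pi.single_apply]
  have hvar : 0 ≤ ∑ i, lam i * t i ^ 2 :=
    Finset.sum_nonneg fun i _ => mul_nonneg (hlam i) (sq_nonneg _)
  simp only [hsingle, hCa, hmean, Real.coe_toNNReal _ hvar, NNReal.coe_mul,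
    Real.coe_toNNReal _ (sq_nonneg _), Real.coe_toNNReal _ (hlam _)]
  push_cast
  simp only [one_mul, one_pow, mul_one]
  rw [Finset.sum_sub_distrib, Finset.sum_mul, Finset.sum_div]
  congr 1 <;> exact Finset.sum_congr rfl fun i _ => by ring

lemma integral_exp_neg_mul_sum_inner_sq {ι : Type*} [Fintype ι] [IsFiniteMeasure P]
    (hP : IsGaussian P μ C) {v : ι → H} (hv : Orthonormal ℝ v) {lam : ι → ℝ}
    (hlam : ∀ i, 0 ≤ lam i) (heig : ∀ i, C (v i) = lam i • v i) {σ : ℝ}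
    (hσ : ∀ i, 0 < 1 + 2 * σ * lam i) (x : H) :
    ∫ y, exp (-σ * ∑ i, ⟪x - y, v i⟫ ^ 2) ∂P
      = exp (-(∑ i, σ / (1 + 2 * σ * lam i) * ⟪x - μ, v i⟫ ^ 2)
          - 1 / 2 * ∑ i, log (1 + 2 * σ * lam i)) := by
  have hprod : ∀ y, exp (-σ * ∑ i, ⟪x - y, v i⟫ ^ 2)
      = ∏ i, exp (-σ * (⟪v i, x⟫ - ⟪v i, y⟫) ^ 2) := fun y => by
    rw [← exp_sum, Finset.mul_sum]
    simp only [inner_sub_left, real_inner_comm]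
  have hmeas : Measurable fun y (i : ι) => ⟪v i, y⟫ := by fun_prop
  simp_rw [hprod]
  rw [← integral_map (f := fun z : ι → ℝ => ∏ i, exp (-σ * (⟪v i, x⟫ - z i) ^ 2))
      hmeas.aemeasurable (Continuous.aestronglyMeasurable (by fun_prop)),
    hP.map_inner_eq_pi hv hlam heig,
    integral_fintype_prod_eq_prod (f := fun i z => exp (-σ * (⟪v i, x⟫ - z) ^ 2))]
  rw [Finset.prod_congr rfl fun i _ => integral_exp_neg_mul_sub_sq_gaussianReal _ _
    (by rw [Real.coe_toNNReal _ (hlam i)]; exact hσ i)]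
  simp_rw [Real.coe_toNNReal _ (hlam _), ← exp_sum]
  congr 1
  simp [Finset.sum_sub_distrib, Finset.mul_sum, inner_sub_left, real_inner_comm]

end IsGaussian

namespace HilbertBasis

variable {ι H : Type*} [NormedAddCommGroup H] [InnerProductSpace ℝ H]

lemma hasSum_inner_sq (b : HilbertBasis ι ℝ H) (x : H) :
    HasSum (fun i => ⟪x, b i⟫ ^ 2) (‖x‖ ^ 2) := by
  simpa [sq, real_inner_comm x] using b.hasSum_inner_mul_inner x x

lemma summable_mul_inner_sq (b : HilbertBasis ι ℝ H) (x : H) {c : ι → ℝ} {K : ℝ}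
    (hc : ∀ i, |c i| ≤ K) : Summable fun i => c i * ⟪x, b i⟫ ^ 2 :=
  ((b.hasSum_inner_sq x).summable.mul_left K).of_norm_bounded fun i => by
    rw [Real.norm_eq_abs, abs_mul, abs_sq]
    exact mul_le_mul_of_nonneg_right (hc i) (sq_nonneg _)

lemma tendsto_integral_exp_neg_mul_sum_inner_sq [MeasurableSpace H] [OpensMeasurableSpace H]
    (b : HilbertBasis ℕ ℝ H) (P : Measure H) [IsFiniteMeasure P] {σ : ℝ} (hσ : 0 ≤ σ) (x : H) :
    Tendsto (fun N => ∫ y, exp (-σ * ∑ j ∈ Finset.range N, ⟪x - y, b j⟫ ^ 2) ∂P) atTop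
      (𝓝 (∫ y, exp (-σ * ‖x - y‖ ^ 2) ∂P)) := by
  refine tendsto_integral_of_dominated_convergence (fun _ => 1)
    (fun N => (Continuous.aestronglyMeasurable (by fun_prop))) (integrable_const 1)
    (fun N => ae_of_all _ fun y => ?_) (ae_of_all _ fun y => ?_)
  · rw [Real.norm_eq_abs, abs_exp, exp_le_one_iff, neg_mul, neg_nonpos]
    exact mul_nonneg hσ (Finset.sum_nonneg fun j _ => sq_nonneg _)
  · exact (continuous_exp.tendsto _).comp
      ((b.hasSum_inner_sq (x - y)).tendsto_sum_nat.const_mul (-σ))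

end HilbertBasis

theorem statement_18_general
    {H : Type*} [NormedAddCommGroup H] [InnerProductSpace ℝ H]
    [MeasurableSpace H] [BorelSpace H]
    (σ : ℝ) (hσ : 0 < σ)
    (P : Measure H) [IsProbabilityMeasure P]
    (μ : H) (C : H →L[ℝ] H) (hP : IsGaussian P μ C)
    (ψ : HilbertBasis ℕ ℝ H) (lam : ℕ → ℝ)
    (hlam : ∀ j, 0 ≤ lam j) (hsum : Summable lam)
    (heig : ∀ j, C (ψ j) = lam j • ψ j) :
    (∀ x : H, Summable fun j => σ / (1 + 2 * σ * lam j) * ⟪x - μ, (ψ j : H)⟫ ^ 2) ∧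
    (Summable fun j => Real.log (1 + 2 * σ * lam j)) ∧
    (∀ x : H,
      Real.log (∫ y, Real.exp (-σ * ‖x - y‖ ^ 2) ∂P)
        = -(∑' j, σ / (1 + 2 * σ * lam j) * ⟪x - μ, (ψ j : H)⟫ ^ 2)
          - (1 / 2) * ∑' j, Real.log (1 + 2 * σ * lam j)) ∧
    (∀ (n : ℕ) (y : Fin n → H),
      Real.log (∫ z : Fin n → H, (∏ i, Real.exp (-σ * ‖y i - z i‖ ^ 2))
          ∂(Measure.pi fun _ : Fin n => P))
        = (∑ i, -(∑' j, σ / (1 + 2 * σ * lam j) * ⟪y i - μ, (ψ j : H)⟫ ^ 2))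
          - (n : ℝ) / 2 * ∑' j, Real.log (1 + 2 * σ * lam j)) := by
  have hD : ∀ j, 0 < 1 + 2 * σ * lam j := fun j => by have := hlam j; positivity
  have hquad : ∀ x : H, Summable fun j => σ / (1 + 2 * σ * lam j) * ⟪x - μ, (ψ j : H)⟫ ^ 2 :=
    fun x => ψ.summable_mul_inner_sq (x - μ) fun j => by
      rw [abs_of_nonneg (div_nonneg hσ.le (hD j).le)]
      exact div_le_self hσ.le (le_add_of_nonneg_right (by have := hlam j; positivity))
  have hlog : Summable fun j => log (1 + 2 * σ * lam j) :=
    Real.summable_log_one_add_of_summable (hsum.mul_left (2 * σ))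
  have hkernel : ∀ x : H, ∫ y, exp (-σ * ‖x - y‖ ^ 2) ∂P
      = exp (-(∑' j, σ / (1 + 2 * σ * lam j) * ⟪x - μ, (ψ j : H)⟫ ^ 2)
          - 1 / 2 * ∑' j, log (1 + 2 * σ * lam j)) := by
    intro x
    refine tendsto_nhds_unique (ψ.tendsto_integral_exp_neg_mul_sum_inner_sq P hσ.le x) ?_
    have hfinite : ∀ N, ∫ y, exp (-σ * ∑ j ∈ Finset.range N, ⟪x - y, (ψ j : H)⟫ ^ 2) ∂P
        = exp (-(∑ j ∈ Finset.range N, σ / (1 + 2 * σ * lam j) * ⟪x - μ, (ψ j : H)⟫ ^ 2)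
          - 1 / 2 * ∑ j ∈ Finset.range N, log (1 + 2 * σ * lam j)) := fun N => by
      simpa only [Function.comp_apply, Finset.sum_range] using
        hP.integral_exp_neg_mul_sum_inner_sq (ψ.orthonormal.comp _ Fin.val_injective)
          (fun j : Fin N => hlam j) (fun j => heig j) (fun j => hD j) x
    simp_rw [hfinite]
    exact (continuous_exp.tendsto _).comp
      ((hquad x).hasSum.tendsto_sum_nat.neg.sub (hlog.hasSum.tendsto_sum_nat.const_mul _))
  refine ⟨hquad, hlog, fun x => by rw [hkernel, log_exp], fun n y => ?_⟩
  rw [integral_fintype_prod_eq_prod (f := fun i z => exp (-σ * ‖y i - z‖ ^ 2)),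
    Finset.prod_congr rfl fun i _ => hkernel (y i), ← exp_sum, log_exp, Finset.sum_sub_distrib]
  simp
  ring

/-- For a Gaussian measure `P = 𝒩(μ, C)` on a real separable Hilbert space,
with eigenvalues `(λⱼ)` of `C` along the orthonormal basis `(ψⱼ)` and `σ > 0`: the two series
below converge, for every `x`,
`log ∫ e^{-σ‖x−y‖²} dP(y)
  = −Σⱼ (σ/(1+2σλⱼ)) ⟨x−μ, ψⱼ⟩² − (1/2) Σⱼ log(1+2σλⱼ)`,
and consequently for `n` i.i.d. observations the log kernel mean of the `n`-fold product measure
with the Gaussian product kernel equals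
`Σᵢ Σⱼ (−σ/(1+2σλⱼ)) ⟨yᵢ−μ, ψⱼ⟩² − (n/2) Σⱼ log(1+2σλⱼ)`. -/
theorem statement_18
    {H : Type*} [NormedAddCommGroup H] [InnerProductSpace ℝ H]
    [CompleteSpace H] [SecondCountableTopology H] [MeasurableSpace H] [BorelSpace H]
    (σ : ℝ) (hσ : 0 < σ)
    (P : Measure H) [IsProbabilityMeasure P]
    (μ : H) (C : H →L[ℝ] H) (hP : IsGaussian P μ C)
    (ψ : HilbertBasis ℕ ℝ H) (lam : ℕ → ℝ)
    (hlam : ∀ j, 0 ≤ lam j) (hsum : Summable lam)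
    (heig : ∀ j, C (ψ j) = lam j • ψ j) :
    (∀ x : H, Summable fun j => σ / (1 + 2 * σ * lam j) * ⟪x - μ, (ψ j : H)⟫ ^ 2) ∧
    (Summable fun j => Real.log (1 + 2 * σ * lam j)) ∧
    (∀ x : H,
      Real.log (∫ y, Real.exp (-σ * ‖x - y‖ ^ 2) ∂P)
        = -(∑' j, σ / (1 + 2 * σ * lam j) * ⟪x - μ, (ψ j : H)⟫ ^ 2)
          - (1 / 2) * ∑' j, Real.log (1 + 2 * σ * lam j)) ∧
    (∀ (n : ℕ) (y : Fin n → H),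
      Real.log (∫ z : Fin n → H, (∏ i, Real.exp (-σ * ‖y i - z i‖ ^ 2))
          ∂(Measure.pi fun _ : Fin n => P))
        = (∑ i, -(∑' j, σ / (1 + 2 * σ * lam j) * ⟪y i - μ, (ψ j : H)⟫ ^ 2))
          - (n : ℝ) / 2 * ∑' j, Real.log (1 + 2 * σ * lam j)) :=
  statement_18_general σ hσ P μ C hP ψ lam hlam hsum heig
end
end
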